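/- arXiv:2504.03407 — 3 statements merged into one kernel-verified Lean document; each statement's English description precedes it below -/
import Mathlib

section
/- Let uⁿ and u^{n+1} be Gaussian wave packets on ℝ^d with parameters (qⁿ, pⁿ, Cⁿ, ζⁿ) and (q^{n+1}, p^{n+1}, C^{n+1}, ζ^{n+1}) for the same ε > 0, and let Qⁿ, Q^{n+1} ∈ ℂ^{d×d} be invertible matrices with Cⁿ_I = (Qⁿ (Qⁿ)*)⁻¹ and C^{n+1}_I = (Q^{n+1} (Q^{n+1})*)⁻¹. Then the phase update formula ζ_I^{n+1} = ζ_I^{n} + (ε/2)(ln|det Q^{n+1}| − ln|det Q^{n}|) holds if and only if ‖uⁿ‖_{L²(ℝ^d)} = ‖u^{n+1}‖_{L²(ℝ^d)}. -/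
/-!
The squared modulus of a Gaussian wave packet is a real Gaussian,
`|u(x)|² = exp(-(x - q)ᵀ (C_I / ε) (x - q)) · exp(-2 ζ_I / ε)`. Factoring `C_I / ε = Bᵀ B` and
substituting `y = B (x - q)` gives `‖u‖² = (π ε)^{d/2} exp(-2 ζ_I / ε) / √(det C_I)`. The relation
`C_I = (Q Q*)⁻¹` forces `√(det C_I) = |det Q|⁻¹`, so `‖u‖² = (π ε)^{d/2} exp(ln |det Q| - 2 ζ_I / ε)`,
and two such norms agree iff the exponents agree, which is the phase update formula.
-/

open MeasureTheory Matrix Complex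

noncomputable section

/-- The Gaussian wave packet on `ℝ^d` with parameters `(q, p, C, ζ)` and
semiclassical parameter `ε`. -/
def gwp (d : ℕ) (ε : ℝ) (q p : Fin d → ℝ) (C : Matrix (Fin d) (Fin d) ℂ) (ζ : ℂ)
    (x : Fin d → ℝ) : ℂ :=
  Complex.exp ((Complex.I / (ε : ℂ)) *
    ((1 / 2 : ℂ) * ((fun i => ((x i - q i : ℝ) : ℂ)) ⬝ᵥ
        C.mulVec (fun i => ((x i - q i : ℝ) : ℂ)))
      + (fun i => ((x i - q i : ℝ) : ℂ)) ⬝ᵥ (fun i => ((p i : ℝ) : ℂ)) + ζ))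

open scoped Real

theorem integral_comp_linearMap_addHaar {E F : Type*} [NormedAddCommGroup E] [NormedSpace ℝ E]
    [MeasurableSpace E] [BorelSpace E] [FiniteDimensional ℝ E] [NormedAddCommGroup F]
    [NormedSpace ℝ F] (μ : Measure E) [μ.IsAddHaarMeasure] {f : E →ₗ[ℝ] E}
    (hf : LinearMap.det f ≠ 0) (g : E → F) :
    ∫ x, g (f x) ∂μ = |(LinearMap.det f)⁻¹| • ∫ y, g y ∂μ := by
  let e := (LinearMap.toContinuousLinearMap f).toContinuousLinearEquivOfDetNeZero hf
  calc ∫ x, g (f x) ∂μ = ∫ x, g (e.toHomeomorph.toMeasurableEquiv x) ∂μ := rfl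
    _ = ∫ y, g y ∂(μ.map f) := (integral_map_equiv _ g).symm
    _ = |(LinearMap.det f)⁻¹| • ∫ y, g y ∂μ := by
      rw [Measure.map_linearMap_addHaar_eq_smul_addHaar μ hf, integral_smul_measure,
        ENNReal.toReal_ofReal (abs_nonneg _)]

theorem integral_exp_neg_dotProduct_self {ι : Type*} [Fintype ι] :
    ∫ y : ι → ℝ, Real.exp (-(y ⬝ᵥ y)) = √π ^ Fintype.card ι := by
  have h1 : ∫ t : ℝ, Real.exp (-t ^ 2) = √π := by simpa using integral_gaussian 1
  simp_rw [dotProduct, ← Finset.sum_neg_distrib, Real.exp_sum, ← h1, ← pow_two]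
  exact integral_fintype_prod_volume_eq_pow (fun t : ℝ => Real.exp (-t ^ 2))

open scoped MatrixOrder Matrix.Norms.L2Operator in
theorem integral_exp_neg_dotProduct_mulVec {ι : Type*} [Fintype ι] [DecidableEq ι]
    {A : Matrix ι ι ℝ} (hA : A.PosDef) :
    ∫ x : ι → ℝ, Real.exp (-(x ⬝ᵥ A *ᵥ x)) = √π ^ Fintype.card ι / √A.det := by
  have hdet := hA.det_pos
  obtain ⟨B, rfl⟩ := CStarAlgebra.nonneg_iff_eq_star_mul_self.mp hA.posSemidef.nonneg
  have hdetB : (star B * B).det = B.det ^ 2 := by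
    rw [det_mul, star_eq_conjTranspose, det_conjTranspose, star_trivial, sq]
  have hB : LinearMap.det (toLin' B) ≠ 0 := by
    rw [LinearMap.det_toLin']; rintro h; simp [hdetB, h] at hdet
  have hquad (x : ι → ℝ) : x ⬝ᵥ (star B * B) *ᵥ x = toLin' B x ⬝ᵥ toLin' B x := by
    rw [← mulVec_mulVec, dotProduct_mulVec, star_eq_conjTranspose,
      conjTranspose_eq_transpose_of_trivial, vecMul_transpose, toLin'_apply]
  calc ∫ x : ι → ℝ, Real.exp (-(x ⬝ᵥ (star B * B) *ᵥ x))
      = ∫ x : ι → ℝ, Real.exp (-(toLin' B x ⬝ᵥ toLin' B x)) := by simp_rw [hquad]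
    _ = √π ^ Fintype.card ι / |B.det| := by
      rw [integral_comp_linearMap_addHaar volume hB (fun y => Real.exp (-(y ⬝ᵥ y))),
        integral_exp_neg_dotProduct_self, LinearMap.det_toLin', abs_inv, smul_eq_mul,
        inv_mul_eq_div]
    _ = √π ^ Fintype.card ι / √(star B * B).det := by rw [hdetB, Real.sqrt_sq_eq_abs]

theorem im_ofReal_dotProduct_mulVec_ofReal {ι : Type*} [Fintype ι] (C : Matrix ι ι ℂ)
    (v : ι → ℝ) :
    ((fun i => (v i : ℂ)) ⬝ᵥ C *ᵥ (fun i => (v i : ℂ))).im = v ⬝ᵥ C.map im *ᵥ v := by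
  simp [dotProduct, mulVec, im_sum, Finset.mul_sum]

theorem norm_exp_I_div_mul_sq (ε : ℝ) (w : ℂ) :
    ‖exp (I / ε * w)‖ ^ 2 = Real.exp (-2 * w.im / ε) := by
  rw [norm_exp, ← Real.exp_nat_mul, div_mul_eq_mul_div, div_ofReal_re, I_mul_re]
  ring_nf

theorem norm_gwp_sq {d : ℕ} (ε : ℝ) (q p : Fin d → ℝ) (C : Matrix (Fin d) (Fin d) ℂ) (ζ : ℂ)
    (x : Fin d → ℝ) :
    ‖gwp d ε q p C ζ x‖ ^ 2
      = Real.exp (-((x - q) ⬝ᵥ (ε⁻¹ • C.map im) *ᵥ (x - q))) * Real.exp (-2 * ζ.im / ε) := by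
  have hlin : ((fun i => ((x i - q i : ℝ) : ℂ)) ⬝ᵥ (fun i => ((p i : ℝ) : ℂ))).im = 0 := by
    simp [dotProduct, im_sum]
  have hquad : ((fun i => ((x i - q i : ℝ) : ℂ)) ⬝ᵥ C *ᵥ (fun i => ((x i - q i : ℝ) : ℂ))).im
      = (x - q) ⬝ᵥ C.map im *ᵥ (x - q) :=
    im_ofReal_dotProduct_mulVec_ofReal C (x - q)
  rw [gwp, norm_exp_I_div_mul_sq, ← Real.exp_add, add_im, add_im, hlin, one_div, ← ofReal_ofNat,
    ← ofReal_inv, im_ofReal_mul, hquad, smul_mulVec, dotProduct_smul, smul_eq_mul]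
  ring_nf

theorem integral_norm_gwp_sq {d : ℕ} {ε : ℝ} (hε : 0 < ε) (q p : Fin d → ℝ)
    {C : Matrix (Fin d) (Fin d) ℂ} (ζ : ℂ) (hC : (C.map im).PosDef) :
    ∫ x, ‖gwp d ε q p C ζ x‖ ^ 2
      = √(π * ε) ^ d * Real.exp (-2 * ζ.im / ε) / √(C.map im).det := by
  simp_rw [norm_gwp_sq, integral_mul_const,
    integral_sub_right_eq_self (fun y => Real.exp (-(y ⬝ᵥ (ε⁻¹ • C.map im) *ᵥ y))),
    integral_exp_neg_dotProduct_mulVec (hC.smul (inv_pos.2 hε)), det_smul, Fintype.card_fin]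
  have hpow : √(ε ^ d) = √ε ^ d := by
    rw [← Real.sqrt_sq (by positivity : 0 ≤ √ε ^ d), ← pow_mul, mul_comm, pow_mul,
      Real.sq_sqrt hε.le]
  rw [Real.sqrt_mul (by positivity), Real.sqrt_mul (by positivity), inv_pow, Real.sqrt_inv, hpow,
    mul_pow]
  field_simp

theorem det_eq_inv_norm_det_sq {ι : Type*} [Fintype ι] [DecidableEq ι] {M : Matrix ι ι ℝ}
    {Q : Matrix ι ι ℂ} (h : M.map ofReal = (Q * Qᴴ)⁻¹) : M.det = ‖Q.det‖⁻¹ ^ 2 := by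
  apply ofReal_injective
  calc (M.det : ℂ) = (M.map ofReal).det := RingHom.map_det ofRealHom M
    _ = (Q.det * starRingEnd ℂ Q.det)⁻¹ := by
      rw [h, det_nonsing_inv, Ring.inverse_eq_inv', det_mul, det_conjTranspose]; rfl
    _ = ((‖Q.det‖⁻¹ ^ 2 : ℝ) : ℂ) := by
      rw [mul_conj, normSq_eq_norm_sq]; push_cast; ring

theorem integral_norm_gwp_sq_of_map_im_eq_inv {d : ℕ} {ε : ℝ} (hε : 0 < ε) (q p : Fin d → ℝ)
    {C : Matrix (Fin d) (Fin d) ℂ} (ζ : ℂ) (hC : (C.map im).PosDef) {Q : Matrix (Fin d) (Fin d) ℂ}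
    (hQ : (C.map im).map ofReal = (Q * Qᴴ)⁻¹) :
    ∫ x, ‖gwp d ε q p C ζ x‖ ^ 2 = √(π * ε) ^ d * Real.exp (Real.log ‖Q.det‖ - 2 * ζ.im / ε) := by
  have hdet := det_eq_inv_norm_det_sq hQ
  have hQpos : 0 < ‖Q.det‖ := by
    have hpos := hC.det_pos
    refine (norm_nonneg _).lt_of_ne' fun h => ?_
    simp [hdet, h] at hpos
  rw [integral_norm_gwp_sq hε q p ζ hC, hdet, Real.sqrt_sq (by positivity), Real.exp_sub,
    Real.exp_log hQpos, neg_mul, neg_div, Real.exp_neg]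
  field_simp

theorem gwp_phase_update_iff_norm_conservation_general
    {d : ℕ} (ε : ℝ) (hε : 0 < ε)
    (q0 p0 q1 p1 : Fin d → ℝ)
    (C0 C1 : Matrix (Fin d) (Fin d) ℂ) (ζ0 ζ1 : ℂ)
    (hC0Ipos : (C0.map Complex.im).PosDef) (hC1Ipos : (C1.map Complex.im).PosDef)
    (Q0 Q1 : Matrix (Fin d) (Fin d) ℂ)
    (hQ0C : (C0.map Complex.im).map ((↑) : ℝ → ℂ) = (Q0 * Q0ᴴ)⁻¹)
    (hQ1C : (C1.map Complex.im).map ((↑) : ℝ → ℂ) = (Q1 * Q1ᴴ)⁻¹) :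
    ζ1.im = ζ0.im + (ε / 2) * (Real.log ‖Q1.det‖ - Real.log ‖Q0.det‖)
      ↔ (∫ x : Fin d → ℝ, ‖gwp d ε q0 p0 C0 ζ0 x‖ ^ 2)
          = ∫ x : Fin d → ℝ, ‖gwp d ε q1 p1 C1 ζ1 x‖ ^ 2 := by
  rw [integral_norm_gwp_sq_of_map_im_eq_inv hε q0 p0 ζ0 hC0Ipos hQ0C,
    integral_norm_gwp_sq_of_map_im_eq_inv hε q1 p1 ζ1 hC1Ipos hQ1C,
    mul_right_inj' (by positivity), Real.exp_eq_exp]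
  constructor <;> intro h <;> field_simp at h ⊢ <;> linarith

/-- The phase update `ζ_I^{n+1} = ζ_I^n + (ε/2)(ln|det Q^{n+1}| − ln|det Qⁿ|)` holds
iff the `L²`-norms of the two Gaussian wave packets agree. -/
theorem gwp_phase_update_iff_norm_conservation
    {d : ℕ} (ε : ℝ) (hε : 0 < ε)
    (q0 p0 q1 p1 : Fin d → ℝ)
    (C0 C1 : Matrix (Fin d) (Fin d) ℂ) (ζ0 ζ1 : ℂ)
    (hC0symm : C0ᵀ = C0) (hC1symm : C1ᵀ = C1)
    (hC0Ipos : (C0.map Complex.im).PosDef) (hC1Ipos : (C1.map Complex.im).PosDef)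
    (Q0 Q1 : Matrix (Fin d) (Fin d) ℂ)
    (hQ0 : IsUnit Q0.det) (hQ1 : IsUnit Q1.det)
    (hQ0C : (C0.map Complex.im).map ((↑) : ℝ → ℂ) = (Q0 * Q0ᴴ)⁻¹)
    (hQ1C : (C1.map Complex.im).map ((↑) : ℝ → ℂ) = (Q1 * Q1ᴴ)⁻¹) :
    ζ1.im = ζ0.im + (ε / 2) * (Real.log ‖Q1.det‖ - Real.log ‖Q0.det‖)
      ↔ (∫ x : Fin d → ℝ, ‖gwp d ε q0 p0 C0 ζ0 x‖ ^ 2)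
          = ∫ x : Fin d → ℝ, ‖gwp d ε q1 p1 C1 ζ1 x‖ ^ 2 :=
  gwp_phase_update_iff_norm_conservation_general ε hε q0 p0 q1 p1 C0 C1 ζ0 ζ1 hC0Ipos hC1Ipos Q0 Q1
    hQ0C hQ1C
end
end

section
/- Let I ⊆ ℝ be an open interval, let S₁, S₂, S₃ : I → ℂ^{d×d} be continuous, and let Q, P : I → ℂ^{d×d} be differentiable with Q(t) invertible for all t ∈ I, satisfying the linear system Q'(t) = S₁(t) Q(t) + S₂(t) P(t) and P'(t) = −S₃(t) Q(t) − S₁(t)ᵀ P(t). Then C := P Q⁻¹ is differentiable on I and satisfies the Riccati-type equation C'(t) = −(S₃(t) + S₁(t)ᵀ C(t) + C(t) S₁(t) + C(t) S₂(t) C(t)). -/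
/-!
By the product rule and the derivative `-Q⁻¹ Q' Q⁻¹` of matrix inversion,
`C' = P' Q⁻¹ - P Q⁻¹ Q' Q⁻¹`. Substituting the linear system and cancelling `Q Q⁻¹ = 1`
turns this into `-(S₃ + S₁ᵀ C + C S₁ + C S₂ C)`, a purely ring-theoretic identity.
-/

open Matrix

section

variable {𝕜 : Type*} [NontriviallyNormedField 𝕜]

theorem Matrix.hasDerivAt_iff {m n α : Type*} [Fintype n] [NormedAddCommGroup α]
    [NormedSpace 𝕜 α] {f : 𝕜 → Matrix m n α} {f' : Matrix m n α} {t : 𝕜} :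
    HasDerivAt f f' t ↔ ∀ i j, HasDerivAt (fun s => f s i j) (f' i j) t :=
  hasDerivAt_pi.trans (forall_congr' fun _ => hasDerivAt_pi)

theorem HasDerivAt.ringInverse {R : Type*} [NormedRing R] [HasSummableGeomSeries R]
    [NormedAlgebra 𝕜 R] {f : 𝕜 → R} {f' : R} {t : 𝕜} (hf : HasDerivAt f f' t)
    (ht : IsUnit (f t)) :
    HasDerivAt (fun s => Ring.inverse (f s))
      (-(Ring.inverse (f t) * f' * Ring.inverse (f t))) t := by
  obtain ⟨u, hu⟩ := ht
  have h := (hu ▸ hasFDerivAt_ringInverse (𝕜 := 𝕜) u).comp_hasDerivAt t hf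
  simp only [_root_.neg_apply, ContinuousLinearMap.mulLeftRight_apply] at h
  rw [← hu, Ring.inverse_unit]
  exact h

variable {m α : Type*} [Fintype m] [DecidableEq m] [NontriviallyNormedField α]
  [CompleteSpace α] [NormedAlgebra 𝕜 α]

/- `HasDerivAt` only sees the topology of `Matrix m m α`, so the statements below do not depend
on the operator norm used in their proofs. -/
attribute [local instance] Matrix.linftyOpNormedAddCommGroup Matrix.linftyOpNormedSpace
  Matrix.linftyOpNormedRing Matrix.linftyOpNormedAlgebra

theorem HasDerivAt.matrix_inv {f : 𝕜 → Matrix m m α} {f' : Matrix m m α} {t : 𝕜}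
    (hf : HasDerivAt f f' t) (ht : IsUnit (f t).det) :
    HasDerivAt (fun s => (f s)⁻¹) (-((f t)⁻¹ * f' * (f t)⁻¹)) t := by
  -- instance search does not see completeness for the operator-norm uniformity
  have : HasSummableGeomSeries (Matrix m m α) :=
    @instHasSummableGeomSeriesOfCompleteSpace _ _ (FiniteDimensional.complete α _)
  have h := hf.ringInverse ((isUnit_iff_isUnit_det _).2 ht)
  simp only [← nonsing_inv_eq_ringInverse] at h
  exact h

theorem HasDerivAt.mul_matrix_inv {g f : 𝕜 → Matrix m m α} {g' f' : Matrix m m α} {t : 𝕜}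
    (hg : HasDerivAt g g' t) (hf : HasDerivAt f f' t) (ht : IsUnit (f t).det) :
    HasDerivAt (fun s => g s * (f s)⁻¹)
      (g' * (f t)⁻¹ - g t * (f t)⁻¹ * f' * (f t)⁻¹) t := by
  rw [show g' * (f t)⁻¹ - g t * (f t)⁻¹ * f' * (f t)⁻¹
      = g' * (f t)⁻¹ + g t * -((f t)⁻¹ * f' * (f t)⁻¹) by noncomm_ring]
  exact hg.mul (hf.matrix_inv ht)

end

theorem riccati_identity_of_mul_eq_one {R : Type*} [Ring R] {q r p a b c e : R}
    (h : q * r = 1) :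
    (-(c * q) - e * p) * r - p * r * (a * q + b * p) * r
      = -(c + e * (p * r) + p * r * a + p * r * b * (p * r)) := by
  simp only [sub_mul, add_mul, mul_add, neg_mul, mul_assoc, h, mul_one]
  abel

theorem riccati_from_linear_system_general
    {d : ℕ} (I : Set ℝ)
    (S₁ S₂ S₃ : ℝ → Matrix (Fin d) (Fin d) ℂ)
    (Q P Q' P' : ℝ → Matrix (Fin d) (Fin d) ℂ)
    (hQdiff : ∀ t ∈ I, ∀ i j, HasDerivAt (fun s => Q s i j) (Q' t i j) t)
    (hPdiff : ∀ t ∈ I, ∀ i j, HasDerivAt (fun s => P s i j) (P' t i j) t)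
    (hQinv : ∀ t ∈ I, IsUnit (Q t).det)
    (hQeq : ∀ t ∈ I, Q' t = S₁ t * Q t + S₂ t * P t)
    (hPeq : ∀ t ∈ I, P' t = -(S₃ t * Q t) - (S₁ t)ᵀ * P t) :
    ∀ t ∈ I, ∀ i j,
      HasDerivAt (fun s => (P s * (Q s)⁻¹) i j)
        ((-(S₃ t + (S₁ t)ᵀ * (P t * (Q t)⁻¹) + (P t * (Q t)⁻¹) * S₁ t
            + (P t * (Q t)⁻¹) * S₂ t * (P t * (Q t)⁻¹))) i j) t := by
  intro t ht
  have hC := (hasDerivAt_iff.2 (hPdiff t ht)).mul_matrix_inv (hasDerivAt_iff.2 (hQdiff t ht))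
    (hQinv t ht)
  rw [hPeq t ht, hQeq t ht, riccati_identity_of_mul_eq_one (mul_nonsing_inv _ (hQinv t ht))]
    at hC
  exact hasDerivAt_iff.1 hC

/-- If `(Q, P)` solve the linear Hagedorn system `Q' = S₁ Q + S₂ P`,
`P' = −S₃ Q − S₁ᵀ P` with `Q(t)` invertible on an open interval `I`, then
`C = P Q⁻¹` is differentiable on `I` and satisfies the Riccati equation
`C' = −(S₃ + S₁ᵀ C + C S₁ + C S₂ C)`. -/
theorem riccati_from_linear_system
    {d : ℕ} (I : Set ℝ) (hIopen : IsOpen I) (hIconn : I.OrdConnected)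
    (S₁ S₂ S₃ : ℝ → Matrix (Fin d) (Fin d) ℂ)
    (hS₁ : ContinuousOn S₁ I) (hS₂ : ContinuousOn S₂ I) (hS₃ : ContinuousOn S₃ I)
    (Q P Q' P' : ℝ → Matrix (Fin d) (Fin d) ℂ)
    (hQdiff : ∀ t ∈ I, ∀ i j, HasDerivAt (fun s => Q s i j) (Q' t i j) t)
    (hPdiff : ∀ t ∈ I, ∀ i j, HasDerivAt (fun s => P s i j) (P' t i j) t)
    (hQinv : ∀ t ∈ I, IsUnit (Q t).det)
    (hQeq : ∀ t ∈ I, Q' t = S₁ t * Q t + S₂ t * P t)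
    (hPeq : ∀ t ∈ I, P' t = -(S₃ t * Q t) - (S₁ t)ᵀ * P t) :
    ∀ t ∈ I, ∀ i j,
      HasDerivAt (fun s => (P s * (Q s)⁻¹) i j)
        ((-(S₃ t + (S₁ t)ᵀ * (P t * (Q t)⁻¹) + (P t * (Q t)⁻¹) * S₁ t
            + (P t * (Q t)⁻¹) * S₂ t * (P t * (Q t)⁻¹))) i j) t :=
  riccati_from_linear_system_general I S₁ S₂ S₃ Q P Q' P' hQdiff hPdiff hQinv hQeq hPeq
end

section
/- Let b, v⁻ ∈ ℝ³ and τ ∈ ℝ. Then the vector v⁺ := v⁻ + (v⁻ + v⁻ × ((τ/2) b)) × (τ b / (1 + |τ b / 2|²)) is the unique vector in ℝ³ satisfying the implicit Boris relation v⁺ − v⁻ = (τ/2) (v⁺ + v⁻) × b. -/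
/-!
With `c = τ/2` and `k = τ/(1 + c²|b|²)`, expanding both sides with the vector triple product
rule shows that the explicit update misses the Boris relation by exactly
`(k (1 + c²|b|²) - 2c) (v⁻ × b)`, which vanishes by the choice of `k`.
The difference `d` of two solutions satisfies `d = c (d × b)`; dotting with `d` gives `|d|² = 0`.
-/

open Matrix

variable {R : Type*}

theorem boris_update_sub_rotation_eq [CommRing R] (v b : Fin 3 → R) (c k : R) :
    ((v + (v + v ⨯₃ (c • b)) ⨯₃ (k • b)) - v)
        - c • ((v + (v + v ⨯₃ (c • b)) ⨯₃ (k • b)) + v) ⨯₃ b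
      = (k * (1 + c ^ 2 * (b ⬝ᵥ b)) - 2 * c) • (v ⨯₃ b) := by
  simp only [map_add, map_sub, map_smul, LinearMap.add_apply, LinearMap.sub_apply,
    LinearMap.smul_apply, cross_cross_eq_smul_sub_smul, cross_self]
  module

theorem boris_update_solves [CommRing R] (v b : Fin 3 → R) {c k : R}
    (hk : k * (1 + c ^ 2 * (b ⬝ᵥ b)) = 2 * c) :
    (v + (v + v ⨯₃ (c • b)) ⨯₃ (k • b)) - v
      = c • ((v + (v + v ⨯₃ (c • b)) ⨯₃ (k • b)) + v) ⨯₃ b := by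
  rw [← sub_eq_zero, boris_update_sub_rotation_eq, hk, sub_self, zero_smul]

theorem one_add_sq_mul_dotProduct_self_pos [CommRing R] [LinearOrder R] [IsStrictOrderedRing R]
    {n : Type*} [Fintype n] (b : n → R) (c : R) : 0 < 1 + c ^ 2 * (b ⬝ᵥ b) := by
  have : 0 ≤ b ⬝ᵥ b := Finset.sum_nonneg fun i _ => mul_self_nonneg (b i)
  positivity

theorem eq_zero_of_eq_smul_cross [CommRing R] [LinearOrder R] [IsStrictOrderedRing R]
    {d b : Fin 3 → R} {c : R} (h : d = c • d ⨯₃ b) : d = 0 := by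
  rw [← dotProduct_self_eq_zero]
  nth_rw 2 [h]
  rw [dotProduct_smul, dot_self_cross, smul_zero]

theorem eq_of_sub_eq_smul_add_cross [CommRing R] [LinearOrder R] [IsStrictOrderedRing R]
    {v w w' b : Fin 3 → R} {c : R} (hw : w - v = c • (w + v) ⨯₃ b)
    (hw' : w' - v = c • (w' + v) ⨯₃ b) : w = w' := by
  refine sub_eq_zero.mp (eq_zero_of_eq_smul_cross (b := b) (c := c) ?_)
  calc w - w' = (w - v) - (w' - v) := (sub_sub_sub_cancel_right w w' v).symm
    _ = c • (w + v) ⨯₃ b - c • (w' + v) ⨯₃ b := by rw [hw, hw']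
    _ = c • (w - w') ⨯₃ b := by
      rw [← smul_sub, ← LinearMap.map_sub₂, add_sub_add_right_eq_sub]

/-- The explicit Boris update
`v⁺ = v⁻ + (v⁻ + v⁻ × (τ/2) b) × (τ b / (1 + |τ b/2|²))`
is the unique solution of the implicit Boris relation
`v⁺ − v⁻ = (τ/2)(v⁺ + v⁻) × b`. -/
theorem boris_rotation_explicit
    (b vminus : Fin 3 → ℝ) (τ : ℝ) :
    (vminus + crossProduct (vminus + crossProduct vminus ((τ / 2) • b))
          ((τ / (1 + (τ / 2) ^ 2 * (b ⬝ᵥ b))) • b))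
        - vminus
      = (τ / 2) • crossProduct
          ((vminus + crossProduct (vminus + crossProduct vminus ((τ / 2) • b))
              ((τ / (1 + (τ / 2) ^ 2 * (b ⬝ᵥ b))) • b))
            + vminus) b
    ∧ ∀ w : Fin 3 → ℝ,
        w - vminus = (τ / 2) • crossProduct (w + vminus) b →
        w = vminus + crossProduct (vminus + crossProduct vminus ((τ / 2) • b))
              ((τ / (1 + (τ / 2) ^ 2 * (b ⬝ᵥ b))) • b) := by
  have hk : τ / (1 + (τ / 2) ^ 2 * (b ⬝ᵥ b)) * (1 + (τ / 2) ^ 2 * (b ⬝ᵥ b)) = 2 * (τ / 2) := by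
    rw [div_mul_cancel₀ _ (one_add_sq_mul_dotProduct_self_pos b _).ne']
    ring
  have hsolves := boris_update_solves vminus b hk
  exact ⟨hsolves, fun w hw => eq_of_sub_eq_smul_add_cross hw hsolves⟩
end
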